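/- Let p : ℝ^d → ℝ be twice continuously differentiable in a neighborhood of a point x, and let H be the Hessian matrix of p at x, with orthonormal eigenvectors v₁, …, v_d and eigenvalues λ₁ ≥ λ₂ ≥ … ≥ λ_d satisfying λ₂ < 0 and λ₁ > λ₂. Let e₁ be a unit vector satisfying ⟨v₁, e₁⟩² > λ₁/(λ₁ − λ₂), and assume the gradient of p at x is orthogonal to the hyperplane e₁⊥, i.e. ⟨∇p(x), u⟩ = 0 for every u orthogonal to e₁. Then x is a strict local maximum of p restricted to the affine subspace x + e₁⊥: there exists ε > 0 such that p(x + u) < p(x) for every u orthogonal to e₁ with 0 < ‖u‖ < ε. (Lemma 4: a sufficient condition for a point to be a local mode of p constrained to the subspace 𝕃 spanned by a basis [e₂,…,e_d] with unit normal e₁ is (v₁ᵀe₁)² > λ₁/(λ₁−λ₂), the constrained first-order condition being made explicit.) -/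

import Mathlib

/-!
On `e₁⊥`, expanding in the eigenbasis gives `uᵀHu ≤ λ₂‖u‖² + (λ₁ - λ₂)⟨v₁, u⟩²`, and
Cauchy–Schwarz against the component of `v₁` orthogonal to `e₁` gives
`⟨v₁, u⟩² ≤ (1 - ⟨v₁, e₁⟩²)‖u‖²`. So the Hessian is bounded on `e₁⊥` by
`(λ₁ - (λ₁ - λ₂)⟨v₁, e₁⟩²)‖u‖²`, and the alignment hypothesis makes this constant negative.
By continuity of the second derivative, for small `u ∈ e₁⊥` the function `t ↦ p (x + t • u)`
is strictly concave on `[0, 1]` with zero slope at `0`, hence `p (x + u) < p x`.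
-/

open Matrix Topology Set

theorem lt_of_deriv_eq_zero_of_deriv2_neg {g g' g'' : ℝ → ℝ} {a b : ℝ} (hab : a < b)
    (hg : ∀ τ ∈ Icc a b, HasDerivAt g (g' τ) τ)
    (hg' : ∀ τ ∈ Icc a b, HasDerivAt g' (g'' τ) τ)
    (hg'a : g' a = 0) (hg'' : ∀ τ ∈ Icc a b, g'' τ < 0) : g b < g a := by
  have hanti' : StrictAntiOn g' (Icc a b) :=
    strictAntiOn_of_hasDerivWithinAt_neg (convex_Icc a b)
      (fun τ hτ => (hg' τ hτ).continuousAt.continuousWithinAt)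
      (fun τ hτ => (hg' τ (interior_subset hτ)).hasDerivWithinAt)
      (fun τ hτ => hg'' τ (interior_subset hτ))
  have hanti : StrictAntiOn g (Icc a b) := by
    refine strictAntiOn_of_hasDerivWithinAt_neg (convex_Icc a b)
      (fun τ hτ => (hg τ hτ).continuousAt.continuousWithinAt)
      (fun τ hτ => (hg τ (interior_subset hτ)).hasDerivWithinAt) fun τ hτ => ?_
    rw [interior_Icc] at hτ
    exact hg'a ▸ hanti' (left_mem_Icc.2 hab.le) (Ioo_subset_Icc_self hτ) hτ.1
  exact hanti (left_mem_Icc.2 hab.le) (right_mem_Icc.2 hab.le) hab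

section

variable {n : Type*} [Fintype n]

theorem Matrix.transpose_mul_self_eq_one_of_dotProduct_rows [DecidableEq n] {V : Matrix n n ℝ}
    (hV : ∀ i j, V i ⬝ᵥ V j = if i = j then 1 else 0) : Vᵀ * V = 1 :=
  mul_eq_one_comm.1 <| by
    ext i j
    simpa [mul_apply, dotProduct, one_apply] using hV i j

theorem Matrix.mulVec_dotProduct_mulVec_self [DecidableEq n] {V : Matrix n n ℝ}
    (hV : Vᵀ * V = 1) (u : n → ℝ) : V *ᵥ u ⬝ᵥ V *ᵥ u = u ⬝ᵥ u := by
  rw [dotProduct_mulVec, ← vecMul_transpose, vecMul_vecMul, ← dotProduct_mulVec, hV, one_mulVec]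

theorem Matrix.dotProduct_mulVec_eq_sum_mul_sq [DecidableEq n] {V H : Matrix n n ℝ}
    {lam : n → ℝ} (hV : Vᵀ * V = 1) (heig : ∀ i, H *ᵥ V i = lam i • V i) (u : n → ℝ) :
    u ⬝ᵥ H *ᵥ u = ∑ i, lam i * (V *ᵥ u) i ^ 2 := by
  have hHV : H * Vᵀ = Vᵀ * diagonal lam := by
    ext j i
    rw [mul_diagonal, transpose_apply]
    simpa [mul_apply, mulVec, dotProduct, mul_comm] using congrFun (heig i) j
  calc u ⬝ᵥ H *ᵥ u = u ⬝ᵥ (H * Vᵀ) *ᵥ (V *ᵥ u) := by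
        rw [← mulVec_mulVec, mulVec_mulVec u Vᵀ, hV, one_mulVec]
    _ = V *ᵥ u ⬝ᵥ diagonal lam *ᵥ (V *ᵥ u) := by
        rw [hHV, ← mulVec_mulVec, dotProduct_mulVec, vecMul_transpose]
    _ = ∑ i, lam i * (V *ᵥ u) i ^ 2 := by
        simp only [dotProduct, mulVec_diagonal, sq]
        exact Finset.sum_congr rfl fun i _ => by ring

theorem dotProduct_sq_le_of_dotProduct_eq_zero {a e u : n → ℝ} (he : e ⬝ᵥ e = 1)
    (hu : e ⬝ᵥ u = 0) : (a ⬝ᵥ u) ^ 2 ≤ (a ⬝ᵥ a - (a ⬝ᵥ e) ^ 2) * (u ⬝ᵥ u) := by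
  -- Cauchy–Schwarz for `u` and the component `w` of `a` orthogonal to `e`.
  set w := a - (a ⬝ᵥ e) • e
  have hwu : w ⬝ᵥ u = a ⬝ᵥ u := by
    simp only [w, sub_dotProduct, smul_dotProduct, hu, smul_eq_mul, mul_zero, sub_zero]
  have hww : w ⬝ᵥ w = a ⬝ᵥ a - (a ⬝ᵥ e) ^ 2 := by
    simp only [w, dotProduct_sub, sub_dotProduct, smul_dotProduct, dotProduct_smul, smul_eq_mul,
      dotProduct_comm e a, he]
    ring
  rw [← hwu, ← hww]
  simpa only [dotProduct, sq] using Finset.sum_mul_sq_le_sq_mul_sq Finset.univ w u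

theorem sum_mul_sq_le_of_forall_ne_le [DecidableEq n] {lam c : n → ℝ} {i₀ i₁ : n}
    (h : ∀ i ≠ i₀, lam i ≤ lam i₁) :
    ∑ i, lam i * c i ^ 2 ≤ lam i₁ * ∑ i, c i ^ 2 + (lam i₀ - lam i₁) * c i₀ ^ 2 := by
  calc ∑ i, lam i * c i ^ 2
      ≤ ∑ i, (lam i₁ * c i ^ 2 + if i = i₀ then (lam i₀ - lam i₁) * c i₀ ^ 2 else 0) := by
        refine Finset.sum_le_sum fun i _ => ?_
        split_ifs with hi
        · subst hi; linarith
        · nlinarith [h i hi, sq_nonneg (c i)]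
    _ = _ := by simp [Finset.sum_add_distrib, Finset.mul_sum]

theorem sq_norm_le_dotProduct_self (u : n → ℝ) : ‖u‖ ^ 2 ≤ u ⬝ᵥ u := by
  have hnn : 0 ≤ u ⬝ᵥ u := Finset.sum_nonneg fun i _ => mul_self_nonneg (u i)
  refine (Real.le_sqrt (norm_nonneg u) hnn).1 <|
    (pi_norm_le_iff_of_nonneg (Real.sqrt_nonneg _)).2 fun i => ?_
  rw [Real.norm_eq_abs]
  exact Real.abs_le_sqrt <| by
    simpa [sq, dotProduct] using
      Finset.single_le_sum (fun j _ => mul_self_nonneg (u j)) (Finset.mem_univ i)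

theorem Matrix.dotProduct_mulVec_le_of_dotProduct_eq_zero [DecidableEq n] {V H : Matrix n n ℝ}
    {lam : n → ℝ} {i₀ i₁ : n} {e u : n → ℝ} (hV : ∀ i j, V i ⬝ᵥ V j = if i = j then 1 else 0)
    (heig : ∀ i, H *ᵥ V i = lam i • V i) (hlam : ∀ i ≠ i₀, lam i ≤ lam i₁)
    (h₁₀ : lam i₁ ≤ lam i₀) (he : e ⬝ᵥ e = 1) (hu : e ⬝ᵥ u = 0) :
    u ⬝ᵥ H *ᵥ u ≤ (lam i₀ - (lam i₀ - lam i₁) * (V i₀ ⬝ᵥ e) ^ 2) * (u ⬝ᵥ u) := by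
  have hVV := transpose_mul_self_eq_one_of_dotProduct_rows hV
  have hcs := dotProduct_sq_le_of_dotProduct_eq_zero (a := V i₀) he hu
  rw [hV i₀ i₀, if_pos rfl] at hcs
  have hparseval : ∑ i, (V *ᵥ u) i ^ 2 = u ⬝ᵥ u := by
    rw [← mulVec_dotProduct_mulVec_self hVV u]
    simp only [dotProduct, sq]
  rw [dotProduct_mulVec_eq_sum_mul_sq hVV heig]
  calc ∑ i, lam i * (V *ᵥ u) i ^ 2
      ≤ lam i₁ * ∑ i, (V *ᵥ u) i ^ 2 + (lam i₀ - lam i₁) * (V i₀ ⬝ᵥ u) ^ 2 :=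
        sum_mul_sq_le_of_forall_ne_le hlam
    _ ≤ _ := by
        rw [hparseval]
        nlinarith [mul_le_mul_of_nonneg_left hcs (sub_nonneg.2 h₁₀)]

end

section

variable {E : Type*} [NormedAddCommGroup E] [NormedSpace ℝ E] {p : E → ℝ} {x : E}

theorem ContDiffAt.eventually_differentiableAt_and_norm_fderiv_fderiv_sub_lt {c : ℝ}
    (hp : ContDiffAt ℝ 2 p x) (hc : 0 < c) :
    ∀ᶠ y in 𝓝 x, DifferentiableAt ℝ p y ∧ DifferentiableAt ℝ (fderiv ℝ p) y ∧
      ‖fderiv ℝ (fderiv ℝ p) y - fderiv ℝ (fderiv ℝ p) x‖ < c := by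
  have hD2 : ContinuousAt (fderiv ℝ (fderiv ℝ p)) x :=
    (hp.fderiv_right (m := 1) le_rfl).continuousAt_fderiv one_ne_zero
  have hnear : ∀ᶠ y in 𝓝 x, ‖fderiv ℝ (fderiv ℝ p) y - fderiv ℝ (fderiv ℝ p) x‖ < c :=
    hD2.eventually (eventually_norm_sub_lt (fderiv ℝ (fderiv ℝ p) x) hc)
  filter_upwards [hp.eventually (by simp), hnear] with y hy hnear
  exact ⟨hy.differentiableAt two_ne_zero,
    (hy.fderiv_right (m := 1) le_rfl).differentiableAt one_ne_zero, hnear⟩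

theorem ContDiffAt.exists_forall_lt_of_fderiv_eq_zero_of_fderiv_fderiv_le {K : Set E} {c : ℝ}
    (hp : ContDiffAt ℝ 2 p x) (hc : 0 < c) (hgrad : ∀ u ∈ K, fderiv ℝ p x u = 0)
    (hhess : ∀ u ∈ K, fderiv ℝ (fderiv ℝ p) x u u ≤ -c * ‖u‖ ^ 2) :
    ∃ ε > 0, ∀ u ∈ K, u ≠ 0 → ‖u‖ < ε → p (x + u) < p x := by
  obtain ⟨ε, hε, hnear⟩ := Metric.eventually_nhds_iff_ball.1
    (hp.eventually_differentiableAt_and_norm_fderiv_fderiv_sub_lt hc)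
  refine ⟨ε, hε, fun u hu hu0 huε => ?_⟩
  have hseg : ∀ τ ∈ Icc (0 : ℝ) 1, x + τ • u ∈ Metric.ball x ε := fun τ hτ => by
    rw [mem_ball_iff_norm, add_sub_cancel_left, norm_smul, Real.norm_of_nonneg hτ.1]
    exact lt_of_le_of_lt (mul_le_of_le_one_left (norm_nonneg u) hτ.2) huε
  have hline : ∀ τ : ℝ, HasDerivAt (fun τ : ℝ => x + τ • u) u τ := fun τ => by
    simpa using ((hasDerivAt_id τ).smul_const u).const_add x
  set D := fderiv ℝ (fderiv ℝ p)
  have hg : ∀ τ ∈ Icc (0 : ℝ) 1,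
      HasDerivAt (fun τ => p (x + τ • u)) (fderiv ℝ p (x + τ • u) u) τ := fun τ hτ =>
    (hnear _ (hseg τ hτ)).1.hasFDerivAt.comp_hasDerivAt τ (hline τ)
  have hg' : ∀ τ ∈ Icc (0 : ℝ) 1,
      HasDerivAt (fun τ => fderiv ℝ p (x + τ • u) u) (D (x + τ • u) u u) τ := fun τ hτ => by
    have hcurve : HasDerivAt (fun τ => fderiv ℝ p (x + τ • u)) (D (x + τ • u) u) τ :=
      (hnear _ (hseg τ hτ)).2.1.hasFDerivAt.comp_hasDerivAt τ (hline τ)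
    have h := hcurve.clm_apply (hasDerivAt_const τ u)
    rwa [map_zero, add_zero] at h
  have hg'' : ∀ τ ∈ Icc (0 : ℝ) 1, D (x + τ • u) u u < 0 := fun τ hτ => by
    have hdiff : D (x + τ • u) u u - D x u u ≤ ‖D (x + τ • u) - D x‖ * ‖u‖ ^ 2 := by
      calc D (x + τ • u) u u - D x u u = (D (x + τ • u) - D x) u u := rfl
        _ ≤ ‖(D (x + τ • u) - D x) u u‖ := le_abs_self _
        _ ≤ ‖D (x + τ • u) - D x‖ * ‖u‖ ^ 2 := by
          simpa only [sq, mul_assoc] using (D (x + τ • u) - D x).le_opNorm₂ u u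
    have hclose := (hnear _ (hseg τ hτ)).2.2
    have hu2 : 0 < ‖u‖ ^ 2 := by positivity
    nlinarith [hhess u hu, mul_lt_mul_of_pos_right hclose hu2]
  simpa using lt_of_deriv_eq_zero_of_deriv2_neg zero_lt_one hg hg' (by simpa using hgrad u hu) hg''

end

/-- Lemma 4: let `p` be twice continuously differentiable near `x`, with Hessian `H`
at `x` (expressed via the second iterated Fréchet derivative), with orthonormal
eigenvectors `v i` and decreasing eigenvalues `lam i` satisfying `λ₂ < 0` and
`λ₁ > λ₂`. If `e₁` is a unit vector with `⟨v₁, e₁⟩² > λ₁/(λ₁ − λ₂)` and the gradient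
of `p` at `x` vanishes on the hyperplane `e₁⊥`, then `x` is a strict local maximum of
`p` restricted to the affine subspace `x + e₁⊥`. -/
theorem stmt8 (d : ℕ) (hd : 2 ≤ d) (p : (Fin d → ℝ) → ℝ) (x : Fin d → ℝ)
    (s : Set (Fin d → ℝ)) (hs : s ∈ 𝓝 x) (hp : ContDiffOn ℝ 2 p s)
    (H : Matrix (Fin d) (Fin d) ℝ)
    (hHess : ∀ w u : Fin d → ℝ, iteratedFDeriv ℝ 2 p x ![w, u] = w ⬝ᵥ H.mulVec u)
    (v : Fin d → (Fin d → ℝ)) (lam : Fin d → ℝ)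
    (horth : ∀ i j : Fin d, v i ⬝ᵥ v j = if i = j then 1 else 0)
    (heig : ∀ i : Fin d, H.mulVec (v i) = lam i • v i)
    (hmono : Antitone lam)
    (hgap : lam ⟨0, by omega⟩ > lam ⟨1, by omega⟩)
    (e1 : Fin d → ℝ) (he1 : e1 ⬝ᵥ e1 = 1)
    (halign : (v ⟨0, by omega⟩ ⬝ᵥ e1) ^ 2 >
      lam ⟨0, by omega⟩ / (lam ⟨0, by omega⟩ - lam ⟨1, by omega⟩))
    (hgrad : ∀ u : Fin d → ℝ, e1 ⬝ᵥ u = 0 → fderiv ℝ p x u = 0) :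
    ∃ ε > 0, ∀ u : Fin d → ℝ, e1 ⬝ᵥ u = 0 → u ≠ 0 →
      Real.sqrt (u ⬝ᵥ u) < ε → p (x + u) < p x := by
  set i₀ : Fin d := ⟨0, by omega⟩
  set i₁ : Fin d := ⟨1, by omega⟩
  set δ := lam i₀ - (lam i₀ - lam i₁) * (v i₀ ⬝ᵥ e1) ^ 2
  have hδ : δ < 0 := by
    have := (div_lt_iff₀ (sub_pos.2 hgap)).1 halign
    linarith
  have hlam : ∀ i ≠ i₀, lam i ≤ lam i₁ := fun i hi =>
    hmono (Fin.le_def.2 (Nat.one_le_iff_ne_zero.2 fun h => hi (Fin.ext h)))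
  obtain ⟨ε, hε, hmax⟩ :=
    (hp.contDiffAt hs).exists_forall_lt_of_fderiv_eq_zero_of_fderiv_fderiv_le (neg_pos.2 hδ)
      (K := {u | e1 ⬝ᵥ u = 0}) hgrad fun u hu => by
      rw [neg_neg]
      calc fderiv ℝ (fderiv ℝ p) x u u = u ⬝ᵥ H *ᵥ u := by
            simpa [iteratedFDeriv_two_apply] using hHess u u
        _ ≤ δ * (u ⬝ᵥ u) :=
            dotProduct_mulVec_le_of_dotProduct_eq_zero horth heig hlam hgap.le he1 hu
        _ ≤ δ * ‖u‖ ^ 2 := mul_le_mul_of_nonpos_left (sq_norm_le_dotProduct_self u) hδ.le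
  exact ⟨ε, hε, fun u hu hu0 hlt =>
    hmax u hu hu0 ((Real.le_sqrt_of_sq_le (sq_norm_le_dotProduct_self u)).trans_lt hlt)⟩
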